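/- arXiv:0710.2331 — 2 statements merged into one kernel-verified Lean document; each statement's English description precedes it below -/
import Mathlib

section
/- Suppose the real sequence (E_n)_{n≥1} satisfies E_n ≥ c·n^α for all n, with c > 0 and 0 < α < 1 (so all E_n > 0 and H^{−1/2} := Σ_m E_m^{−1/2}P_m is a bounded operator). Then for every p ≥ 1 there exists a constant K > 0, depending only on p, α and c, such that for every δ > 0, every bounded operator B with ‖B‖_{p,δ} < ∞, and every n ≥ 1: ‖P_n B Q_n H^{−1/2}‖ ≤ K·‖B‖_{p,δ}·n^{−2δ−α/2}, where Q_n := I − P_n. -/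
noncomputable section

open ContinuousLinearMap

variable {𝓗 : Type*} [NormedAddCommGroup 𝓗] [InnerProductSpace ℂ 𝓗] [CompleteSpace 𝓗]

/-- `⟨x⟩ := max {1, |x|}`. -/
def jap (x : ℝ) : ℝ := max 1 |x|

/-- `(Pₙ)_{n≥1}` is a family of mutually orthogonal nonzero orthogonal projections
with `Σₙ Pₙ = I` in the strong sense. -/
def ProjFamily (P : ℕ+ → 𝓗 →L[ℂ] 𝓗) : Prop :=
  (∀ n, IsSelfAdjoint (P n)) ∧ (∀ n, (P n).comp (P n) = P n) ∧
  (∀ m n, m ≠ n → (P m).comp (P n) = 0) ∧ (∀ n, P n ≠ 0) ∧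
  (∀ ψ : 𝓗, HasSum (fun n => P n ψ) ψ)

/-- The quantity `⟨m-n⟩^p · max{m,n}^(2δ) · ‖Pₘ A Pₙ‖`; the norm `‖A‖_{p,δ}` is its
supremum over `m, n ≥ 1`. -/
def wnorm (P : ℕ+ → 𝓗 →L[ℂ] 𝓗) (p δ : ℝ) (A : 𝓗 →L[ℂ] 𝓗) (m n : ℕ+) : ℝ :=
  jap (((m : ℕ) : ℝ) - ((n : ℕ) : ℝ)) ^ p * (((max m n : ℕ+) : ℕ) : ℝ) ^ (2 * δ) *
    ‖(P m).comp (A.comp (P n))‖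

/-- `A` is diagonal with respect to the family `P`. -/
def IsDiag (P : ℕ+ → 𝓗 →L[ℂ] 𝓗) (A : 𝓗 →L[ℂ] 𝓗) : Prop :=
  ∀ m n, m ≠ n → (P m).comp (A.comp (P n)) = 0

/-- `Dom(H) = {ψ : Σₙ Eₙ²‖Pₙψ‖² < ∞}`. -/
def HDom (P : ℕ+ → 𝓗 →L[ℂ] 𝓗) (E : ℕ+ → ℝ) : Set 𝓗 :=
  {ψ | Summable fun n => (E n) ^ 2 * ‖P n ψ‖ ^ 2}

/-- The form domain `Q_H = {ψ : Σₙ Eₙ‖Pₙψ‖² < ∞}`. -/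
def QDom (P : ℕ+ → 𝓗 →L[ℂ] 𝓗) (E : ℕ+ → ℝ) : Set 𝓗 :=
  {ψ | Summable fun n => E n * ‖P n ψ‖ ^ 2}

/-- `h = Hψ`, i.e. `h = Σₙ Eₙ Pₙ ψ`. -/
def IsHSum (P : ℕ+ → 𝓗 →L[ℂ] 𝓗) (E : ℕ+ → ℝ) (ψ h : 𝓗) : Prop :=
  HasSum (fun n => (E n : ℂ) • P n ψ) h

/-- `U` is unitary. -/
def IsUnitaryOp (U : 𝓗 →L[ℂ] 𝓗) : Prop := U * star U = 1 ∧ star U * U = 1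

/-- A family of bounded operators which is `C¹` in the strong sense. -/
def StrongC1 (V : ℝ → 𝓗 →L[ℂ] 𝓗) : Prop := ∀ ψ : 𝓗, ContDiff ℝ 1 fun t => V t ψ

/-- `U(t,s)` is a propagator for `H + V(t)`. -/
def IsPropagator (P : ℕ+ → 𝓗 →L[ℂ] 𝓗) (E : ℕ+ → ℝ) (V : ℝ → 𝓗 →L[ℂ] 𝓗)
    (U : ℝ → ℝ → 𝓗 →L[ℂ] 𝓗) : Prop :=
  (∀ t s, IsUnitaryOp (U t s)) ∧
  (∀ ψ : 𝓗, Continuous fun ts : ℝ × ℝ => U ts.1 ts.2 ψ) ∧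
  (∀ t, U t t = 1) ∧
  (∀ t s r, (U t s).comp (U s r) = U t r) ∧
  (∀ t s, ⇑(U t s) '' HDom P E = HDom P E) ∧
  (∀ s : ℝ, ∀ ψ ∈ HDom P E, ∀ t : ℝ, ∃ d : 𝓗,
    HasDerivAt (fun τ => U τ s ψ) d t ∧
    ∀ h : 𝓗, IsHSum P E (U t s ψ) h → Complex.I • d = h + V t (U t s ψ))

/-- The Riemann zeta function `ζ(s) = Σ_{n≥1} n^{-s}` (for real `s > 1`). -/
def rzeta (s : ℝ) : ℝ := ∑' n : ℕ+, (((n : ℕ) : ℝ) ^ s)⁻¹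

/-- The constant `C_p = 2^(p+1) (1 + 2 ζ(p-1))`. -/
def Cconst (p : ℝ) : ℝ := 2 ^ (p + 1) * (1 + 2 * rzeta (p - 1))

/-!
Expanding `H^{-1/2} ψ = Σₘ Eₘ^{-1/2} Pₘ ψ`, the vector `Pₙ B Qₙ H^{-1/2} ψ` is the sum of the
blocks `Eₘ^{-1/2} Pₙ B Pₘ` (`m ≠ n`) applied to the mutually orthogonal pieces `Pₘ ψ`.
Cauchy–Schwarz and Bessel's inequality bound its norm by `(Σₘ Eₘ⁻¹ ‖Pₙ B Pₘ‖²)^{1/2} ‖ψ‖`, and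
the weights in `‖B‖_{p,δ}` give `Eₘ⁻¹ ‖Pₙ B Pₘ‖² ≤ c⁻¹ b² n^{-4δ} m^{-α} (n - m)^{-2}`.
Splitting at `m = n/2`: for `m ≥ n/2` one has `m^{-α} ≤ 2 n^{-α}` and `Σ_{k ≠ 0} k^{-2} = π²/3`;
for `m < n/2` there are fewer than `n` terms, each at most `4/n²`. Hence
`Σₘ m^{-α} (n - m)^{-2} ≤ 12 n^{-α}`.
-/

open Real Finset
open scoped ComplexInnerProductSpace

-- The `k = 0` term is `0⁻¹ = 0`.
lemma sum_inv_int_sq_le (t : Finset ℤ) : ∑ k ∈ t, ((k : ℝ) ^ 2)⁻¹ ≤ π ^ 2 / 3 := by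
  have hnat : HasSum (fun k : ℕ => (((k : ℤ) : ℝ) ^ 2)⁻¹) (π ^ 2 / 6) := by
    simp only [Int.cast_natCast, ← one_div]
    exact hasSum_zeta_two
  have hneg : HasSum (fun k : ℕ => (((-k : ℤ) : ℝ) ^ 2)⁻¹) (π ^ 2 / 6) := by
    simp only [Int.cast_neg, Int.cast_natCast, neg_sq, ← one_div]
    exact hasSum_zeta_two
  have hint := HasSum.of_nat_of_neg (f := fun k : ℤ => ((k : ℝ) ^ 2)⁻¹) hnat hneg
  refine (sum_le_hasSum t (fun _ _ => by positivity) hint).trans_eq ?_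
  simp only [Int.cast_zero]
  ring

lemma sum_inv_sub_sq_le (n : ℕ+) (s : Finset ℕ+) :
    ∑ m ∈ s, ((((n : ℕ) : ℝ) - ((m : ℕ) : ℝ)) ^ 2)⁻¹ ≤ 4 := by
  have hinj : Set.InjOn (fun m : ℕ+ => ((n : ℕ) : ℤ) - ((m : ℕ) : ℤ)) s := by
    intro a _ b _ hab
    simpa using hab
  calc ∑ m ∈ s, ((((n : ℕ) : ℝ) - ((m : ℕ) : ℝ)) ^ 2)⁻¹
      = ∑ k ∈ s.image fun m : ℕ+ => ((n : ℕ) : ℤ) - ((m : ℕ) : ℤ), ((k : ℝ) ^ 2)⁻¹ := by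
        rw [sum_image hinj]
        push_cast
        rfl
    _ ≤ π ^ 2 / 3 := sum_inv_int_sq_le _
    _ ≤ 4 := by nlinarith [pi_lt_d2, pi_pos]

lemma rpow_neg_le_two_mul_rpow_neg {x y α : ℝ} (hx : 0 < x) (hxy : x ≤ 2 * y)
    (hα0 : 0 ≤ α) (hα1 : α ≤ 1) : y ^ (-α) ≤ 2 * x ^ (-α) := by
  calc y ^ (-α) ≤ (x / 2) ^ (-α) :=
        rpow_le_rpow_of_nonpos (by positivity) (by linarith) (by linarith)
    _ = 2 ^ α * x ^ (-α) := by
      rw [div_rpow hx.le zero_le_two, rpow_neg zero_le_two, div_eq_mul_inv, inv_inv, mul_comm]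
    _ ≤ 2 * x ^ (-α) := by
      gcongr
      simpa using rpow_le_rpow_of_exponent_le one_le_two hα1

lemma sum_rpow_neg_mul_inv_sub_sq_le {α : ℝ} (hα0 : 0 ≤ α) (hα1 : α ≤ 1) (n : ℕ+)
    (s : Finset ℕ+) :
    ∑ m ∈ s, ((m : ℕ) : ℝ) ^ (-α) * ((((n : ℕ) : ℝ) - ((m : ℕ) : ℝ)) ^ 2)⁻¹ ≤
      12 * ((n : ℕ) : ℝ) ^ (-α) := by
  set x : ℝ := ((n : ℕ) : ℝ)
  have hx : 1 ≤ x := Nat.one_le_cast.2 n.pos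
  set near := s.filter fun m : ℕ+ => (n : ℕ) ≤ 2 * (m : ℕ)
  set far := s.filter fun m : ℕ+ => ¬(n : ℕ) ≤ 2 * (m : ℕ)
  rw [← sum_filter_add_sum_filter_not s fun m : ℕ+ => (n : ℕ) ≤ 2 * (m : ℕ)]
  have hnear : ∑ m ∈ near, ((m : ℕ) : ℝ) ^ (-α) * ((x - ((m : ℕ) : ℝ)) ^ 2)⁻¹ ≤
      8 * x ^ (-α) :=
    calc _ ≤ ∑ m ∈ near, 2 * x ^ (-α) * ((x - ((m : ℕ) : ℝ)) ^ 2)⁻¹ := by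
          refine sum_le_sum fun m hm => ?_
          have hm : x ≤ 2 * ((m : ℕ) : ℝ) := by
            have := (Nat.cast_le (α := ℝ)).2 (mem_filter.1 hm).2
            push_cast at this
            exact this
          gcongr
          exact rpow_neg_le_two_mul_rpow_neg (by positivity) hm hα0 hα1
      _ = 2 * x ^ (-α) * ∑ m ∈ near, ((x - ((m : ℕ) : ℝ)) ^ 2)⁻¹ := (mul_sum ..).symm
      _ ≤ 2 * x ^ (-α) * 4 := by gcongr; exact sum_inv_sub_sq_le n _
      _ = 8 * x ^ (-α) := by ring
  have hfar : ∑ m ∈ far, ((m : ℕ) : ℝ) ^ (-α) * ((x - ((m : ℕ) : ℝ)) ^ 2)⁻¹ ≤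
      4 * x ^ (-α) := by
    have hcard : (#far : ℝ) ≤ x := by
      have : #far ≤ #(range n) :=
        card_le_card_of_injOn (fun m => (m : ℕ))
          (fun m hm => by
            have := (mem_filter.1 hm).2
            simp only [coe_range, Set.mem_Iio]
            omega)
          (fun a _ b _ h => PNat.coe_injective h)
      simpa [x] using this
    calc _ ≤ ∑ m ∈ far, 4 / x ^ 2 := by
          refine sum_le_sum fun m hm => ?_
          have hm1 : (1 : ℝ) ≤ (m : ℕ) := Nat.one_le_cast.2 m.pos
          have hm : 2 * ((m : ℕ) : ℝ) < x := by
            have := (Nat.cast_lt (α := ℝ)).2 (not_le.1 (mem_filter.1 hm).2)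
            push_cast at this
            exact this
          calc _ ≤ 1 * ((x / 2) ^ 2)⁻¹ := by
                gcongr
                · exact rpow_le_one_of_one_le_of_nonpos hm1 (by linarith)
                · linarith
            _ = 4 / x ^ 2 := by field_simp; norm_num
      _ = #far * (4 / x ^ 2) := by rw [sum_const, nsmul_eq_mul]
      _ ≤ x * (4 / x ^ 2) := by gcongr
      _ = 4 * x ^ (-1 : ℝ) := by rw [rpow_neg_one]; field_simp
      _ ≤ 4 * x ^ (-α) := by gcongr
  linarith

lemma isStarProjection_sum {ι R : Type*} [NonUnitalSemiring R] [StarRing R] {P : ι → R}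
    (hP : ∀ i, IsStarProjection (P i)) (horth : Pairwise fun i j => P i * P j = 0)
    (s : Finset ι) : IsStarProjection (∑ i ∈ s, P i) := by
  classical
  induction s using Finset.induction_on with
  | empty => simp [IsStarProjection.zero]
  | insert a s ha ih =>
    rw [sum_insert ha]
    refine (hP a).add ih ?_
    rw [mul_sum]
    exact sum_eq_zero fun i hi => horth (ne_of_mem_of_not_mem hi ha).symm

section ProjectionFamily

variable {ι : Type*} {P : ι → 𝓗 →L[ℂ] 𝓗}

lemma norm_sum_apply_sq (hP : ∀ i, IsStarProjection (P i))
    (horth : Pairwise fun i j => P i * P j = 0) (s : Finset ι) (ψ : 𝓗) :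
    ‖(∑ i ∈ s, P i) ψ‖ ^ 2 = ∑ i ∈ s, ‖P i ψ‖ ^ 2 := by
  classical
  induction s using Finset.induction_on with
  | empty => simp
  | insert a s ha ih =>
    have hperp : ⟪P a ψ, (∑ i ∈ s, P i) ψ⟫ = 0 := by
      have hsymm : ⟪P a ψ, (∑ i ∈ s, P i) ψ⟫ = ⟪ψ, P a ((∑ i ∈ s, P i) ψ)⟫ :=
        (hP a).isSelfAdjoint.isSymmetric _ _
      rw [hsymm, ← comp_apply, ← ContinuousLinearMap.mul_def, mul_sum,
        sum_eq_zero fun i hi => horth (ne_of_mem_of_not_mem hi ha).symm]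
      simp
    rw [sum_insert ha, sum_insert ha, add_apply, sq,
      norm_add_sq_eq_norm_sq_add_norm_sq_of_inner_eq_zero _ _ hperp, ← ih, sq, sq]

lemma sum_norm_apply_sq_le (hP : ∀ i, IsStarProjection (P i))
    (horth : Pairwise fun i j => P i * P j = 0) (s : Finset ι) (ψ : 𝓗) :
    ∑ i ∈ s, ‖P i ψ‖ ^ 2 ≤ ‖ψ‖ ^ 2 := by
  rw [← norm_sum_apply_sq hP horth]
  gcongr
  calc ‖(∑ i ∈ s, P i) ψ‖ ≤ ‖∑ i ∈ s, P i‖ * ‖ψ‖ := le_opNorm _ _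
    _ ≤ ‖ψ‖ := mul_le_of_le_one_left (norm_nonneg _) ((isStarProjection_sum hP horth s).norm_le)

lemma norm_apply_le_of_hasSum_smul (hP : ∀ i, IsStarProjection (P i))
    (horth : Pairwise fun i j => P i * P j = 0) {F : Type*} [NormedAddCommGroup F] [NormedSpace ℂ F]
    (L : 𝓗 →L[ℂ] F) (a : ι → ℂ) {C : ℝ} (hC0 : 0 ≤ C)
    (hC : ∀ s : Finset ι, ∑ i ∈ s, (‖a i‖ * ‖L ∘L P i‖) ^ 2 ≤ C ^ 2)
    {ψ x : 𝓗} (hx : HasSum (fun i => a i • P i ψ) x) : ‖L x‖ ≤ C * ‖ψ‖ := by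
  refine le_of_tendsto' (hx.mapL L).norm fun s => ?_
  calc ‖∑ i ∈ s, L (a i • P i ψ)‖ ≤ ∑ i ∈ s, (‖a i‖ * ‖L ∘L P i‖) * ‖P i ψ‖ := by
        refine norm_sum_le_of_le s fun i _ => ?_
        have hLP : L (P i ψ) = (L ∘L P i) (P i ψ) := by
          rw [comp_apply, ← comp_apply (P i), ← ContinuousLinearMap.mul_def,
            (hP i).isIdempotentElem.eq]
        rw [map_smul, norm_smul, mul_assoc, hLP]
        gcongr
        exact le_opNorm _ _
    _ ≤ √(∑ i ∈ s, (‖a i‖ * ‖L ∘L P i‖) ^ 2) * √(∑ i ∈ s, ‖P i ψ‖ ^ 2) :=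
        Real.sum_mul_le_sqrt_mul_sqrt _ _ _
    _ ≤ √(C ^ 2) * √(‖ψ‖ ^ 2) := by
        gcongr
        · exact hC s
        · exact sum_norm_apply_sq_le hP horth s ψ
    _ = C * ‖ψ‖ := by rw [Real.sqrt_sq hC0, Real.sqrt_sq (norm_nonneg _)]

end ProjectionFamily

section BlockBounds

variable {E : Type*} [NormedAddCommGroup E] [InnerProductSpace ℂ E]

lemma wnorm_nonneg (P : ℕ+ → E →L[ℂ] E) (p δ : ℝ) (A : E →L[ℂ] E) (m n : ℕ+) :
    0 ≤ wnorm P p δ A m n := by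
  unfold wnorm jap
  positivity

lemma norm_block_le_of_wnorm_le {P : ℕ+ → E →L[ℂ] E} {p δ b : ℝ} {A : E →L[ℂ] E} {n m : ℕ+}
    (hp : 1 ≤ p) (hδ : 0 ≤ δ) (hb : wnorm P p δ A n m ≤ b) :
    ‖(P n).comp (A.comp (P m))‖ ≤
      b * (jap (((n : ℕ) : ℝ) - ((m : ℕ) : ℝ)))⁻¹ * ((n : ℕ) : ℝ) ^ (-(2 * δ)) := by
  set J := jap (((n : ℕ) : ℝ) - ((m : ℕ) : ℝ))
  set M : ℝ := (((max n m : ℕ+) : ℕ) : ℝ)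
  have hJ : 1 ≤ J := le_max_left _ _
  have hx : (0 : ℝ) < (n : ℕ) := by positivity
  have hM : ((n : ℕ) : ℝ) ≤ M := by simp [M]
  have hweight : J * ((n : ℕ) : ℝ) ^ (2 * δ) ≤ J ^ p * M ^ (2 * δ) := by
    gcongr
    exact self_le_rpow_of_one_le hJ hp
  rw [rpow_neg hx.le, mul_assoc, ← mul_inv, ← div_eq_mul_inv, le_div_iff₀ (by positivity)]
  calc _ ≤ ‖(P n).comp (A.comp (P m))‖ * (J ^ p * M ^ (2 * δ)) := by gcongr
    _ = wnorm P p δ A n m := by unfold wnorm; ring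
    _ ≤ b := hb

end BlockBounds

lemma jap_natCast_sub_of_ne {n m : ℕ+} (h : m ≠ n) :
    jap (((n : ℕ) : ℝ) - ((m : ℕ) : ℝ)) = |((n : ℕ) : ℝ) - ((m : ℕ) : ℝ)| := by
  have hne : ((n : ℕ) : ℤ) - ((m : ℕ) : ℤ) ≠ 0 := by
    have := PNat.coe_injective.ne h
    omega
  refine max_eq_right ?_
  exact_mod_cast Int.one_le_abs hne

-- For `m = n` both sides vanish: `(1 - Pₙ) Pₙ = 0` and `|0|⁻¹ = 0`.
lemma norm_offDiagRow_comp_le {P : ℕ+ → 𝓗 →L[ℂ] 𝓗} (hP : ∀ i, IsStarProjection (P i))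
    (horth : Pairwise fun i j => P i * P j = 0) {p δ b : ℝ} {B : 𝓗 →L[ℂ] 𝓗} {n : ℕ+}
    {m : ℕ+} (hp : 1 ≤ p) (hδ : 0 ≤ δ) (hb : wnorm P p δ B n m ≤ b) :
    ‖((P n).comp (B.comp (1 - P n))).comp (P m)‖ ≤
      b * |((n : ℕ) : ℝ) - ((m : ℕ) : ℝ)|⁻¹ * ((n : ℕ) : ℝ) ^ (-(2 * δ)) := by
  by_cases hmn : m = n
  · subst hmn
    have h0 : (1 - P m).comp (P m) = 0 := (hP m).one_sub_mul_self
    rw [comp_assoc, comp_assoc, h0, comp_zero, comp_zero, norm_zero, sub_self, abs_zero,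
      inv_zero, mul_zero, zero_mul]
  · have h1 : (1 - P n).comp (P m) = P m := by
      rw [← ContinuousLinearMap.mul_def, sub_mul, one_mul, horth (Ne.symm hmn), sub_zero]
    rw [comp_assoc, comp_assoc, h1, ← jap_natCast_sub_of_ne hmn]
    exact norm_block_le_of_wnorm_le hp hδ hb

lemma norm_ofReal_rpow_neg_half_sq_le {c x α e : ℝ} (hc : 0 < c) (hx : 0 < x)
    (he : c * x ^ α ≤ e) : ‖((e ^ (-(1 : ℝ) / 2) : ℝ) : ℂ)‖ ^ 2 ≤ c⁻¹ * x ^ (-α) := by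
  have he0 : 0 < e := lt_of_lt_of_le (by positivity) he
  rw [Complex.norm_real, Real.norm_eq_abs, sq_abs, ← rpow_mul_natCast he0.le,
    show -(1 : ℝ) / 2 * (2 : ℕ) = -1 by norm_num, rpow_neg_one, rpow_neg hx.le, ← mul_inv]
  exact inv_anti₀ (by positivity) he

lemma sum_sq_weighted_norm_offDiagRow_le {P : ℕ+ → 𝓗 →L[ℂ] 𝓗}
    (hP : ∀ i, IsStarProjection (P i)) (horth : Pairwise fun i j => P i * P j = 0)
    {E : ℕ+ → ℝ} {c α : ℝ} (hc : 0 < c) (hα0 : 0 ≤ α) (hα1 : α ≤ 1)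
    (hE : ∀ m : ℕ+, c * ((m : ℕ) : ℝ) ^ α ≤ E m) {p δ b : ℝ} {B : 𝓗 →L[ℂ] 𝓗} {n : ℕ+}
    (hp : 1 ≤ p) (hδ : 0 ≤ δ) (hb : ∀ m, wnorm P p δ B n m ≤ b) (s : Finset ℕ+) :
    ∑ m ∈ s, (‖((E m ^ (-(1 : ℝ) / 2) : ℝ) : ℂ)‖ *
        ‖((P n).comp (B.comp (1 - P n))).comp (P m)‖) ^ 2 ≤
      (√(12 / c) * b * ((n : ℕ) : ℝ) ^ (-(2 * δ) - α / 2)) ^ 2 := by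
  set x : ℝ := ((n : ℕ) : ℝ)
  have hx : 0 < x := by positivity
  calc _ ≤ ∑ m ∈ s, c⁻¹ * b ^ 2 * (x ^ (-(2 * δ))) ^ 2 *
        (((m : ℕ) : ℝ) ^ (-α) * ((x - ((m : ℕ) : ℝ)) ^ 2)⁻¹) := by
        refine sum_le_sum fun m _ => ?_
        rw [mul_pow]
        calc _ ≤ (c⁻¹ * ((m : ℕ) : ℝ) ^ (-α)) *
              (b * |x - ((m : ℕ) : ℝ)|⁻¹ * x ^ (-(2 * δ))) ^ 2 := by
              gcongr
              · exact norm_ofReal_rpow_neg_half_sq_le hc (by positivity) (hE m)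
              · exact norm_offDiagRow_comp_le hP horth hp hδ (hb m)
          _ = _ := by rw [mul_pow, mul_pow, inv_pow, sq_abs]; ring
    _ = c⁻¹ * b ^ 2 * (x ^ (-(2 * δ))) ^ 2 *
        ∑ m ∈ s, ((m : ℕ) : ℝ) ^ (-α) * ((x - ((m : ℕ) : ℝ)) ^ 2)⁻¹ := (mul_sum ..).symm
    _ ≤ c⁻¹ * b ^ 2 * (x ^ (-(2 * δ))) ^ 2 * (12 * x ^ (-α)) := by
        gcongr
        exact sum_rpow_neg_mul_inv_sub_sq_le hα0 hα1 n s
    _ = (√(12 / c) * b * x ^ (-(2 * δ) - α / 2)) ^ 2 := by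
        have hhalf : (x ^ (α / 2)) ^ 2 = x ^ α := by
          rw [← rpow_mul_natCast hx.le]
          norm_num
        rw [mul_pow, mul_pow, sq_sqrt (by positivity), rpow_sub hx, div_pow, hhalf,
          rpow_neg hx.le α]
        field_simp

/-- Lemma 3.3: for `B ∈ 𝒴(p,δ)`,
`‖Pₙ B Qₙ H^{-1/2}‖ ≤ K ‖B‖_{p,δ} n^{-2δ-α/2}`. -/
theorem statement9
    (P : ℕ+ → 𝓗 →L[ℂ] 𝓗) (hP : ProjFamily P)
    (E : ℕ+ → ℝ) (c α : ℝ) (hc : 0 < c) (hα0 : 0 < α) (hα1 : α < 1)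
    (hE : ∀ n : ℕ+, c * ((n : ℕ) : ℝ) ^ α ≤ E n)
    (p : ℝ) (hp : 1 ≤ p) :
    ∃ K > 0, ∀ δ : ℝ, 0 < δ → ∀ (B : 𝓗 →L[ℂ] 𝓗) (b : ℝ),
      (∀ m n : ℕ+, wnorm P p δ B m n ≤ b) →
      ∀ Hih : 𝓗 →L[ℂ] 𝓗,
        (∀ ψ : 𝓗, HasSum (fun m => ((E m ^ (-(1 : ℝ) / 2) : ℝ) : ℂ) • P m ψ) (Hih ψ)) →
        ∀ n : ℕ+,
          ‖(P n).comp (B.comp ((1 - P n).comp Hih))‖ ≤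
            K * b * ((n : ℕ) : ℝ) ^ (-(2 * δ) - α / 2) := by
  obtain ⟨hsa, hid, horth, -, -⟩ := hP
  have hproj : ∀ n, IsStarProjection (P n) := fun n => ⟨hid n, hsa n⟩
  refine ⟨√(12 / c), by positivity, fun δ hδ B b hb Hih hHih n => ?_⟩
  have hb0 : 0 ≤ b := (wnorm_nonneg P p δ B 1 1).trans (hb 1 1)
  have hK : 0 ≤ √(12 / c) * b * ((n : ℕ) : ℝ) ^ (-(2 * δ) - α / 2) := by positivity
  exact opNorm_le_bound _ hK fun ψ =>
    norm_apply_le_of_hasSum_smul hproj horth _ _ hK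
      (sum_sq_weighted_norm_offDiagRow_le hproj horth hc hα0.le hα1.le hE hp hδ.le (hb n))
      (hHih ψ)
end
end

section
/- Let p₁, p₂ > 1 and δ₁, δ₂ ≥ 0, and suppose p and δ satisfy 1 < p ≤ min{p₁,p₂}, max{δ₁,δ₂} ≤ δ ≤ δ₁ + δ₂, and p + 2δ ≤ min{p₁ + 2δ₁, p₂ + 2δ₂}. Set δ₀ := min{δ₁,δ₂}. Then for all integers m, n ≥ 1: Σ_{ℓ=1}^∞ ⟨m−n⟩^p·max{m,n}^{2δ} / (⟨m−ℓ⟩^{p₁}·max{m,ℓ}^{2δ₁}·⟨n−ℓ⟩^{p₂}·max{n,ℓ}^{2δ₂}) ≤ 2^{p+2(δ−δ₀)}·(2 + 4ζ(p)). -/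
noncomputable section

open Real

/-!
Write `a = ⟨m - ℓ⟩`, `b = ⟨n - ℓ⟩` and assume `n ≤ m` (the other case is symmetric). The triangle
inequality `⟨m - n⟩ ≤ a + b` gives `⟨m - n⟩ · min a b ≤ 2ab`, and `max m n = m` satisfies both
`m ≤ max m ℓ` and `m ≤ a + max n ℓ ≤ 2a · max n ℓ`. Splitting `m^(2δ) = m^(2δ₁) · m^(2(δ - δ₁))`,
the exponent conditions `p + 2(δ - δ₁) ≤ p₁`, `p ≤ p₂`, `2(δ - δ₁) ≤ 2δ₂` bound the summand by
`2^(p + 2(δ - δ₁)) / (min a b)^p ≤ 2^(p + 2(δ - δ₁)) (a^-p + b^-p)`. Finally `ℓ ↦ m - ℓ` embeds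
`ℕ+` into `ℤ`, so `Σ_ℓ ⟨m - ℓ⟩^-p ≤ Σ_{k ∈ ℤ} ⟨k⟩^-p = 1 + 2ζ(p)`.
-/

lemma one_le_jap (x : ℝ) : 1 ≤ jap x := le_max_left _ _

lemma abs_le_jap (x : ℝ) : |x| ≤ jap x := le_max_right _ _

lemma jap_pos (x : ℝ) : 0 < jap x := one_pos.trans_le (one_le_jap x)

lemma jap_neg (x : ℝ) : jap (-x) = jap x := by rw [jap, jap, abs_neg]

lemma jap_sub_comm (x y : ℝ) : jap (x - y) = jap (y - x) := by rw [← jap_neg, neg_sub]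

lemma jap_zero : jap 0 = 1 := by simp [jap]

lemma jap_natCast {n : ℕ} (hn : n ≠ 0) : jap n = n := by
  rw [jap, Nat.abs_cast, max_eq_right (Nat.one_le_cast.mpr (Nat.one_le_iff_ne_zero.mpr hn))]

lemma jap_sub_le_add (x y z : ℝ) : jap (x - y) ≤ jap (x - z) + jap (y - z) := by
  refine max_le (by linarith [one_le_jap (x - z), one_le_jap (y - z)]) ?_
  calc |x - y| ≤ |x - z| + |y - z| := abs_sub_comm z y ▸ abs_sub_le x z y
    _ ≤ jap (x - z) + jap (y - z) := add_le_add (abs_le_jap _) (abs_le_jap _)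

section ZetaBound

variable {p : ℝ}

lemma hasSum_pnat_inv_jap_rpow (hp : 1 < p) :
    HasSum (fun n : ℕ+ => (jap (n : ℕ) ^ p)⁻¹) (rzeta p) := by
  simp only [jap_natCast (PNat.ne_zero _)]
  exact ((summable_nat_rpow_inv.mpr hp).comp_injective PNat.coe_injective).hasSum

lemma summable_nat_inv_jap_rpow (hp : 1 < p) : Summable (fun n : ℕ => (jap n ^ p)⁻¹) :=
  summable_pnat_iff_summable_nat.mp (hasSum_pnat_inv_jap_rpow hp).summable

lemma summable_int_inv_jap_rpow (hp : 1 < p) : Summable (fun k : ℤ => (jap k ^ p)⁻¹) :=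
  .of_nat_of_neg (by simpa using summable_nat_inv_jap_rpow hp)
    (by simpa [jap_neg] using summable_nat_inv_jap_rpow hp)

lemma tsum_int_inv_jap_rpow (hp : 1 < p) : ∑' k : ℤ, (jap k ^ p)⁻¹ = 1 + 2 * rzeta p := by
  rw [tsum_int_eq_zero_add_two_mul_tsum_pnat (fun k => by simp [jap_neg])
    (summable_int_inv_jap_rpow hp)]
  simpa [jap_zero] using (hasSum_pnat_inv_jap_rpow hp).tsum_eq

lemma sub_pnat_injective (x : ℤ) : Function.Injective (fun ℓ : ℕ+ => x - ((ℓ : ℕ) : ℤ)) :=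
  fun a b h => by simpa using h

lemma summable_pnat_inv_jap_sub_rpow (hp : 1 < p) (x : ℤ) :
    Summable (fun ℓ : ℕ+ => (jap (x - (ℓ : ℕ)) ^ p)⁻¹) := by
  simpa [Function.comp_def] using
    (summable_int_inv_jap_rpow hp).comp_injective (sub_pnat_injective x)

lemma tsum_pnat_inv_jap_sub_rpow_le (hp : 1 < p) (x : ℤ) :
    ∑' ℓ : ℕ+, (jap (x - (ℓ : ℕ)) ^ p)⁻¹ ≤ 1 + 2 * rzeta p := by
  rw [← tsum_int_inv_jap_rpow hp]
  simpa [Function.comp_def] using tsum_comp_le_tsum_of_inj (summable_int_inv_jap_rpow hp)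
    (fun k => (inv_pos.mpr (rpow_pos_of_pos (jap_pos k) p)).le) (sub_pnat_injective x)

end ZetaBound

lemma jap_sub_mul_min_le (x y z : ℝ) :
    jap (x - y) * min (jap (x - z)) (jap (y - z)) ≤ 2 * (jap (x - z) * jap (y - z)) := by
  set a := jap (x - z)
  set b := jap (y - z)
  have ha : 0 ≤ a := (jap_pos _).le
  have hb : 0 ≤ b := (jap_pos _).le
  calc jap (x - y) * min a b ≤ (a + b) * min a b :=
        mul_le_mul_of_nonneg_right (jap_sub_le_add x y z) (le_min ha hb)
    _ = a * min a b + b * min a b := add_mul ..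
    _ ≤ a * b + b * a := by gcongr <;> simp
    _ = 2 * (a * b) := by ring

lemma le_two_mul_jap_sub_mul {x z w : ℝ} (hw : 1 ≤ w) (hzw : z ≤ w) :
    x ≤ 2 * (jap (x - z) * w) := by
  have ha := one_le_jap (x - z)
  have hx : x - z ≤ jap (x - z) := (le_abs_self _).trans (abs_le_jap _)
  nlinarith [mul_nonneg (sub_nonneg.mpr ha) (sub_nonneg.mpr hw)]

section Pointwise

variable {p₁ p₂ δ₁ δ₂ p δ : ℝ}

lemma rpow_mul_rpow_le_of_le_two_mul (hp : 0 ≤ p) (hδ₁ : 0 ≤ δ₁) (hδ : δ₁ ≤ δ) (hδ₂ : δ - δ₁ ≤ δ₂)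
    (hp₁ : p + 2 * (δ - δ₁) ≤ p₁) (hp₂ : p ≤ p₂) {K a b A B M : ℝ} (hK : 0 ≤ K) (ha : 1 ≤ a)
    (hb : 1 ≤ b) (hB : 1 ≤ B) (hM : 0 < M) (hKab : K ≤ 2 * (a * b)) (hMA : M ≤ A)
    (hMB : M ≤ 2 * (a * B)) :
    K ^ p * M ^ (2 * δ) ≤
      2 ^ (p + 2 * (δ - δ₁)) * (a ^ p₁ * A ^ (2 * δ₁) * (b ^ p₂ * B ^ (2 * δ₂))) := by
  have ha₀ : 0 < a := by linarith
  have hb₀ : 0 < b := by linarith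
  have hB₀ : 0 < B := by linarith
  have hA₀ : 0 < A := hM.trans_le hMA
  have he : 0 ≤ 2 * (δ - δ₁) := by linarith
  calc K ^ p * M ^ (2 * δ) = K ^ p * (M ^ (2 * δ₁) * M ^ (2 * (δ - δ₁))) := by
        rw [← rpow_add hM]; ring_nf
    _ ≤ (2 * (a * b)) ^ p * (A ^ (2 * δ₁) * (2 * (a * B)) ^ (2 * (δ - δ₁))) := by gcongr
    _ = 2 ^ (p + 2 * (δ - δ₁)) *
          (a ^ (p + 2 * (δ - δ₁)) * A ^ (2 * δ₁) * (b ^ p * B ^ (2 * (δ - δ₁)))) := by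
        rw [mul_rpow two_pos.le (by positivity), mul_rpow ha₀.le hb₀.le,
          mul_rpow two_pos.le (by positivity), mul_rpow ha₀.le hB₀.le, rpow_add two_pos,
          rpow_add ha₀]
        ring
    _ ≤ 2 ^ (p + 2 * (δ - δ₁)) * (a ^ p₁ * A ^ (2 * δ₁) * (b ^ p₂ * B ^ (2 * δ₂))) := by
        gcongr

lemma jap_mul_min_rpow_mul_max_rpow_le_of_le (hp : 0 ≤ p) (hδ₁ : 0 ≤ δ₁) (hδ : δ₁ ≤ δ)
    (hδ₂ : δ - δ₁ ≤ δ₂) (hp₁ : p + 2 * (δ - δ₁) ≤ p₁) (hp₂ : p ≤ p₂) {x y z : ℝ} (hx : 0 < x)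
    (hz : 1 ≤ z) (hyx : y ≤ x) :
    (jap (x - y) * min (jap (x - z)) (jap (y - z))) ^ p * max x y ^ (2 * δ) ≤
      2 ^ (p + 2 * (δ - δ₁)) * (jap (x - z) ^ p₁ * max x z ^ (2 * δ₁) *
        (jap (y - z) ^ p₂ * max y z ^ (2 * δ₂))) := by
  have hB : 1 ≤ max y z := hz.trans (le_max_right _ _)
  rw [max_eq_left hyx]
  exact rpow_mul_rpow_le_of_le_two_mul hp hδ₁ hδ hδ₂ hp₁ hp₂
    (mul_nonneg (jap_pos _).le (le_min (jap_pos _).le (jap_pos _).le)) (one_le_jap _)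
    (one_le_jap _) hB hx (jap_sub_mul_min_le x y z) (le_max_left x z)
    (le_two_mul_jap_sub_mul hB (le_max_right y z))

lemma jap_mul_min_rpow_mul_max_rpow_le (hp : 0 ≤ p) (hδ₁ : 0 ≤ δ₁) (hδ₂ : 0 ≤ δ₂)
    (hpmin : p ≤ min p₁ p₂) (hδlow : max δ₁ δ₂ ≤ δ) (hδhigh : δ ≤ δ₁ + δ₂)
    (hsum : p + 2 * δ ≤ min (p₁ + 2 * δ₁) (p₂ + 2 * δ₂)) {x y z : ℝ} (hx : 0 < x) (hy : 0 < y)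
    (hz : 1 ≤ z) :
    (jap (x - y) * min (jap (x - z)) (jap (y - z))) ^ p * max x y ^ (2 * δ) ≤
      2 ^ (p + 2 * (δ - min δ₁ δ₂)) * (jap (x - z) ^ p₁ * max x z ^ (2 * δ₁) *
        (jap (y - z) ^ p₂ * max y z ^ (2 * δ₂))) := by
  obtain ⟨hp₁, hp₂⟩ := le_min_iff.mp hpmin
  obtain ⟨hsum₁, hsum₂⟩ := le_min_iff.mp hsum
  obtain ⟨hδ₁δ, hδ₂δ⟩ := max_le_iff.mp hδlow
  have hD :
      0 ≤ jap (x - z) ^ p₁ * max x z ^ (2 * δ₁) * (jap (y - z) ^ p₂ * max y z ^ (2 * δ₂)) := by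
    have := jap_pos (x - z)
    have := jap_pos (y - z)
    positivity
  have hconst {δ' : ℝ} (h : min δ₁ δ₂ ≤ δ') :
      (2 : ℝ) ^ (p + 2 * (δ - δ')) ≤ 2 ^ (p + 2 * (δ - min δ₁ δ₂)) :=
    rpow_le_rpow_of_exponent_le one_le_two (by linarith)
  rcases le_total y x with hyx | hxy
  · have key := jap_mul_min_rpow_mul_max_rpow_le_of_le hp hδ₁ hδ₁δ (by linarith : δ - δ₁ ≤ δ₂)
      (by linarith : p + 2 * (δ - δ₁) ≤ p₁) hp₂ hx hz hyx
    exact key.trans (mul_le_mul_of_nonneg_right (hconst (min_le_left _ _)) hD)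
  · have key := jap_mul_min_rpow_mul_max_rpow_le_of_le hp hδ₂ hδ₂δ (by linarith : δ - δ₂ ≤ δ₁)
      (by linarith : p + 2 * (δ - δ₂) ≤ p₂) hp₁ hy hz hxy
    rw [jap_sub_comm y x, min_comm, max_comm y x, mul_comm (jap (y - z) ^ p₂ * _)] at key
    exact key.trans (mul_le_mul_of_nonneg_right (hconst (min_le_right _ _)) hD)

lemma div_rpow_min_le {C a b : ℝ} (hC : 0 ≤ C) (ha : 0 < a) (hb : 0 < b) :
    C / min a b ^ p ≤ C * (a ^ p)⁻¹ + C * (b ^ p)⁻¹ := by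
  have ha' : 0 ≤ C * (a ^ p)⁻¹ := by positivity
  have hb' : 0 ≤ C * (b ^ p)⁻¹ := by positivity
  rcases min_choice a b with h | h <;> rw [h, div_eq_mul_inv] <;> linarith

lemma summand_le (hp : 0 ≤ p) (hδ₁ : 0 ≤ δ₁) (hδ₂ : 0 ≤ δ₂)
    (hpmin : p ≤ min p₁ p₂) (hδlow : max δ₁ δ₂ ≤ δ) (hδhigh : δ ≤ δ₁ + δ₂)
    (hsum : p + 2 * δ ≤ min (p₁ + 2 * δ₁) (p₂ + 2 * δ₂)) {x y z : ℝ} (hx : 0 < x) (hy : 0 < y)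
    (hz : 1 ≤ z) :
    jap (x - y) ^ p * max x y ^ (2 * δ) /
        (jap (x - z) ^ p₁ * max x z ^ (2 * δ₁) * (jap (y - z) ^ p₂ * max y z ^ (2 * δ₂))) ≤
      2 ^ (p + 2 * (δ - min δ₁ δ₂)) * (jap (x - z) ^ p)⁻¹ +
        2 ^ (p + 2 * (δ - min δ₁ δ₂)) * (jap (y - z) ^ p)⁻¹ := by
  have ha := jap_pos (x - z)
  have hb := jap_pos (y - z)
  have hmin : 0 < min (jap (x - z)) (jap (y - z)) := lt_min ha hb
  refine le_trans ?_ (div_rpow_min_le (by positivity) ha hb)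
  rw [div_le_div_iff₀ (by positivity) (by positivity)]
  have key := jap_mul_min_rpow_mul_max_rpow_le hp hδ₁ hδ₂ hpmin hδlow hδhigh hsum hx hy hz
  rw [mul_rpow (jap_pos _).le hmin.le] at key
  linarith

lemma summand_nonneg {x y z : ℝ} (hx : 0 < x) (hz : 0 < z) :
    0 ≤ jap (x - y) ^ p * max x y ^ (2 * δ) /
        (jap (x - z) ^ p₁ * max x z ^ (2 * δ₁) * (jap (y - z) ^ p₂ * max y z ^ (2 * δ₂))) := by
  have := jap_pos (x - y)
  have := jap_pos (x - z)
  have := jap_pos (y - z)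
  positivity

end Pointwise

lemma PNat.coe_max (m n : ℕ+) : ((max m n : ℕ+) : ℕ) = max (m : ℕ) n := rfl

theorem statement14_general (p₁ p₂ δ₁ δ₂ p δ : ℝ)
    (hδ₁ : 0 ≤ δ₁) (hδ₂ : 0 ≤ δ₂)
    (hp : 1 < p) (hpmin : p ≤ min p₁ p₂)
    (hδlow : max δ₁ δ₂ ≤ δ) (hδhigh : δ ≤ δ₁ + δ₂)
    (hsum : p + 2 * δ ≤ min (p₁ + 2 * δ₁) (p₂ + 2 * δ₂)) :
    ∀ m n : ℕ+,
      Summable (fun ℓ : ℕ+ =>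
        jap (((m : ℕ) : ℝ) - ((n : ℕ) : ℝ)) ^ p * (((max m n : ℕ+) : ℕ) : ℝ) ^ (2 * δ) /
          (jap (((m : ℕ) : ℝ) - ((ℓ : ℕ) : ℝ)) ^ p₁ *
            (((max m ℓ : ℕ+) : ℕ) : ℝ) ^ (2 * δ₁) *
            (jap (((n : ℕ) : ℝ) - ((ℓ : ℕ) : ℝ)) ^ p₂ *
              (((max n ℓ : ℕ+) : ℕ) : ℝ) ^ (2 * δ₂)))) ∧
      ∑' ℓ : ℕ+,
          jap (((m : ℕ) : ℝ) - ((n : ℕ) : ℝ)) ^ p * (((max m n : ℕ+) : ℕ) : ℝ) ^ (2 * δ) /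
            (jap (((m : ℕ) : ℝ) - ((ℓ : ℕ) : ℝ)) ^ p₁ *
              (((max m ℓ : ℕ+) : ℕ) : ℝ) ^ (2 * δ₁) *
              (jap (((n : ℕ) : ℝ) - ((ℓ : ℕ) : ℝ)) ^ p₂ *
                (((max n ℓ : ℕ+) : ℕ) : ℝ) ^ (2 * δ₂))) ≤
        2 ^ (p + 2 * (δ - min δ₁ δ₂)) * (2 + 4 * rzeta p) := by
  intro m n
  simp only [PNat.coe_max, Nat.cast_max]
  set C : ℝ := 2 ^ (p + 2 * (δ - min δ₁ δ₂))
  have hone (k : ℕ+) : (1 : ℝ) ≤ (k : ℕ) := by exact_mod_cast k.pos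
  have hpos (k : ℕ+) : (0 : ℝ) < (k : ℕ) := zero_lt_one.trans_le (hone k)
  have hsummable (k : ℕ+) : Summable (fun ℓ : ℕ+ => (jap ((k : ℕ) - (ℓ : ℕ)) ^ p)⁻¹) := by
    simpa using summable_pnat_inv_jap_sub_rpow hp (k : ℕ)
  have htsum (k : ℕ+) : ∑' ℓ : ℕ+, (jap ((k : ℕ) - (ℓ : ℕ)) ^ p)⁻¹ ≤ 1 + 2 * rzeta p := by
    simpa using tsum_pnat_inv_jap_sub_rpow_le hp (k : ℕ)
  have hbound := fun ℓ : ℕ+ => summand_le (by linarith) hδ₁ hδ₂ hpmin hδlow hδhigh hsum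
    (hpos m) (hpos n) (hone ℓ)
  have hmajorant := ((hsummable m).mul_left C).add ((hsummable n).mul_left C)
  have hsummand := Summable.of_nonneg_of_le (fun ℓ => summand_nonneg (hpos m) (hpos ℓ)) hbound
    hmajorant
  refine ⟨hsummand, ?_⟩
  calc _ ≤ _ := Summable.tsum_le_tsum hbound hsummand hmajorant
    _ = C * ∑' ℓ : ℕ+, (jap ((m : ℕ) - (ℓ : ℕ)) ^ p)⁻¹ +
          C * ∑' ℓ : ℕ+, (jap ((n : ℕ) - (ℓ : ℕ)) ^ p)⁻¹ := by
      rw [Summable.tsum_add ((hsummable m).mul_left C) ((hsummable n).mul_left C), tsum_mul_left,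
        tsum_mul_left]
    _ ≤ C * (1 + 2 * rzeta p) + C * (1 + 2 * rzeta p) := by gcongr <;> apply htsum
    _ = C * (2 + 4 * rzeta p) := by ring

/-- the summation estimate from the proof of Lemma 2.2. -/
theorem statement14 (p₁ p₂ δ₁ δ₂ p δ : ℝ)
    (hp₁ : 1 < p₁) (hp₂ : 1 < p₂) (hδ₁ : 0 ≤ δ₁) (hδ₂ : 0 ≤ δ₂)
    (hp : 1 < p) (hpmin : p ≤ min p₁ p₂)
    (hδlow : max δ₁ δ₂ ≤ δ) (hδhigh : δ ≤ δ₁ + δ₂)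
    (hsum : p + 2 * δ ≤ min (p₁ + 2 * δ₁) (p₂ + 2 * δ₂)) :
    ∀ m n : ℕ+,
      Summable (fun ℓ : ℕ+ =>
        jap (((m : ℕ) : ℝ) - ((n : ℕ) : ℝ)) ^ p * (((max m n : ℕ+) : ℕ) : ℝ) ^ (2 * δ) /
          (jap (((m : ℕ) : ℝ) - ((ℓ : ℕ) : ℝ)) ^ p₁ *
            (((max m ℓ : ℕ+) : ℕ) : ℝ) ^ (2 * δ₁) *
            (jap (((n : ℕ) : ℝ) - ((ℓ : ℕ) : ℝ)) ^ p₂ *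
              (((max n ℓ : ℕ+) : ℕ) : ℝ) ^ (2 * δ₂)))) ∧
      ∑' ℓ : ℕ+,
          jap (((m : ℕ) : ℝ) - ((n : ℕ) : ℝ)) ^ p * (((max m n : ℕ+) : ℕ) : ℝ) ^ (2 * δ) /
            (jap (((m : ℕ) : ℝ) - ((ℓ : ℕ) : ℝ)) ^ p₁ *
              (((max m ℓ : ℕ+) : ℕ) : ℝ) ^ (2 * δ₁) *
              (jap (((n : ℕ) : ℝ) - ((ℓ : ℕ) : ℝ)) ^ p₂ *
                (((max n ℓ : ℕ+) : ℕ) : ℝ) ^ (2 * δ₂))) ≤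
        2 ^ (p + 2 * (δ - min δ₁ δ₂)) * (2 + 4 * rzeta p) :=
  statement14_general p₁ p₂ δ₁ δ₂ p δ hδ₁ hδ₂ hp hpmin hδlow hδhigh hsum

end
end
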